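/- arXiv:2511.06155 — 2 statements merged into one kernel-verified Lean document; each statement's English description precedes it below -/
import Mathlib

section
/- Compatibility of balancing of classes and of operators: Let K be a commutative ring, q, y ∈ K, n ≥ 1, and a_1,…,a_n ∈ K such that ∏_{i=1}^{n}(1 − a_i) = 0 and 1 − a_i q^m is a unit in K for every 1 ≤ i ≤ n and every integer m ≥ 1. Define the balanced series 𝓑_y𝓘 := ∑_{d≥0} [∏_{i=1}^{n}∏_{m=1}^{d}(1 − y a_i q^m)] · [∏_{i=1}^{n}∏_{m=1}^{d}(1 − a_i q^m)]^{−1} Q^d ∈ K[[Q]]. Then ((1 − a_1σ_q) ∘ ⋯ ∘ (1 − a_nσ_q))(𝓑_y𝓘) = ((1 − y a_1σ_q) ∘ ⋯ ∘ (1 − y a_nσ_q))(Q·𝓑_y𝓘). Equivalently, the balanced q-difference operator 𝓗_y(𝒟) = ∏_{i=1}^{n}(1 − a_i q^{Q∂_Q}) / ∏_{i=1}^{n}(1 − y a_i q^{Q∂_Q}) − Q annihilates 𝓑_y(𝓘). -/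
open Finset

/-- The λ_y-balanced hypergeometric series
`𝓑_y𝓘 = ∑_{d ≥ 0} [∏ᵢ∏_{m=1}^{d}(1 - y aᵢ qᵐ)] · [∏ᵢ∏_{m=1}^{d}(1 - aᵢ qᵐ)]⁻¹ Qᵈ`,
where the inverse is `Ring.inverse` (each denominator factor is assumed to be a unit). -/
noncomputable def hypBalI {K : Type*} [CommRing K] (q y : K) {n : ℕ} (a : Fin n → K) :
    PowerSeries K :=
  PowerSeries.mk fun d =>
    (∏ i : Fin n, ∏ m ∈ Finset.Icc 1 d, (1 - y * a i * q ^ m)) *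
      Ring.inverse (∏ i : Fin n, ∏ m ∈ Finset.Icc 1 d, (1 - a i * q ^ m))

/-- The composition `(1 - a₁σ_q) ∘ (1 - a₂σ_q) ∘ ⋯ ∘ (1 - a_nσ_q)` of the `q`-difference
operators `f ↦ f - aᵢ · σ_q(f)`, where `σ_q` is the rescaling operator
`PowerSeries.rescale q` realizing `q^{Q∂_Q}`. -/
noncomputable def qDiffProd {K : Type*} [CommRing K] (q : K) {n : ℕ} (a : Fin n → K) :
    PowerSeries K → PowerSeries K :=
  (List.ofFn fun i : Fin n => fun g : PowerSeries K =>
      g - PowerSeries.C (a i) * PowerSeries.rescale q g).foldr (· ∘ ·) id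

lemma coeff_qDiffProd {K : Type*} [CommRing K] (q : K) :
    ∀ {n : ℕ} (a : Fin n → K) (f : PowerSeries K) (d : ℕ),
      PowerSeries.coeff d (qDiffProd q a f)
        = (∏ i : Fin n, (1 - a i * q ^ d)) * PowerSeries.coeff d f := by
  intro n
  induction n with
  | zero => intro a f d; simp [qDiffProd]
  | succ n ih =>
    intro a f d
    have hs : qDiffProd q a f =
        qDiffProd q (fun i : Fin n => a i.succ) f -
          PowerSeries.C (a 0) *
            PowerSeries.rescale q (qDiffProd q (fun i : Fin n => a i.succ) f) := by
      simp [qDiffProd, List.ofFn_succ]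
    rw [hs, map_sub, PowerSeries.coeff_C_mul, PowerSeries.coeff_rescale, ih,
      Fin.prod_univ_succ]
    ring

/-- **Compatibility of balancing of classes and of operators.**
If `∏ᵢ (1 - aᵢ) = 0` and every `1 - aᵢ qᵐ` (`m ≥ 1`) is a unit, then
`((1 - a₁σ_q) ∘ ⋯ ∘ (1 - a_nσ_q)) (𝓑_y𝓘) = ((1 - y a₁σ_q) ∘ ⋯ ∘ (1 - y a_nσ_q)) (Q · 𝓑_y𝓘)`,
i.e. the balanced `q`-difference operator
`𝓗_y(𝒟) = ∏ᵢ(1 - aᵢ q^{Q∂_Q}) / ∏ᵢ(1 - y aᵢ q^{Q∂_Q}) - Q` annihilates `𝓑_y(𝓘)`. -/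
theorem balanced_qDiff_annihilates_balanced_hypI {K : Type*} [CommRing K] (q y : K)
    {n : ℕ} (hn : 1 ≤ n) (a : Fin n → K)
    (h0 : ∏ i : Fin n, (1 - a i) = 0)
    (hu : ∀ (i : Fin n) (m : ℕ), 1 ≤ m → IsUnit (1 - a i * q ^ m)) :
    qDiffProd q a (hypBalI q y a) =
      qDiffProd q (fun i => y * a i) (PowerSeries.X * hypBalI q y a) := by
  ext d
  rw [coeff_qDiffProd, coeff_qDiffProd]
  cases d with
  | zero =>
      simp only [pow_zero, mul_one]
      rw [h0, zero_mul]
      have : (PowerSeries.coeff 0) (PowerSeries.X * hypBalI q y a) = 0 := by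
        simp [PowerSeries.coeff_zero_eq_constantCoeff, PowerSeries.constantCoeff_X]
      rw [this, mul_zero]
  | succ d =>
      rw [PowerSeries.coeff_succ_X_mul]
      simp only [hypBalI, PowerSeries.coeff_mk]
      have hsplit : ∀ b : Fin n → K,
          (∏ i : Fin n, ∏ m ∈ Finset.Icc 1 (d + 1), (1 - b i * q ^ m))
            = (∏ i : Fin n, ∏ m ∈ Finset.Icc 1 d, (1 - b i * q ^ m)) *
                ∏ i : Fin n, (1 - b i * q ^ (d + 1)) := by
        intro b
        rw [← Finset.prod_mul_distrib]
        refine Finset.prod_congr rfl fun i _ => ?_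
        rw [Finset.prod_Icc_succ_top (Nat.le_add_left 1 d)]
      have hsy : ∀ i : Fin n, y * a i * q ^ (d + 1) = (y * a i) * q ^ (d + 1) := fun _ => rfl
      rw [hsplit (fun i => a i)]
      have hy : (∏ i : Fin n, ∏ m ∈ Finset.Icc 1 (d + 1), (1 - y * a i * q ^ m))
          = (∏ i : Fin n, ∏ m ∈ Finset.Icc 1 d, (1 - y * a i * q ^ m)) *
              ∏ i : Fin n, (1 - y * a i * q ^ (d + 1)) := hsplit (fun i => y * a i)
      rw [hy]
      have hP : IsUnit (∏ i : Fin n, (1 - a i * q ^ (d + 1))) := by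
        exact Finset.prod_induction _ IsUnit (fun _ _ => IsUnit.mul) isUnit_one
          (fun i _ => hu i (d + 1) (Nat.le_add_left 1 d))
      rw [Ring.mul_inverse_rev]
      have hcancel : (∏ i : Fin n, (1 - a i * q ^ (d + 1))) *
          Ring.inverse (∏ i : Fin n, (1 - a i * q ^ (d + 1))) = 1 :=
        Ring.mul_inverse_cancel _ hP
      calc (∏ i : Fin n, (1 - a i * q ^ (d + 1))) *
            ((∏ i : Fin n, ∏ m ∈ Finset.Icc 1 d, (1 - y * a i * q ^ m)) *
                (∏ i : Fin n, (1 - y * a i * q ^ (d + 1))) *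
              (Ring.inverse (∏ i : Fin n, (1 - a i * q ^ (d + 1))) *
                Ring.inverse (∏ i : Fin n, ∏ m ∈ Finset.Icc 1 d, (1 - a i * q ^ m))))
          = ((∏ i : Fin n, (1 - a i * q ^ (d + 1))) *
              Ring.inverse (∏ i : Fin n, (1 - a i * q ^ (d + 1)))) *
              ((∏ i : Fin n, (1 - y * a i * q ^ (d + 1))) *
                ((∏ i : Fin n, ∏ m ∈ Finset.Icc 1 d, (1 - y * a i * q ^ m)) *
                  Ring.inverse (∏ i : Fin n, ∏ m ∈ Finset.Icc 1 d, (1 - a i * q ^ m)))) := by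
            ring
        _ = (∏ i : Fin n, (1 - y * a i * q ^ (d + 1))) *
              ((∏ i : Fin n, ∏ m ∈ Finset.Icc 1 d, (1 - y * a i * q ^ m)) *
                Ring.inverse (∏ i : Fin n, ∏ m ∈ Finset.Icc 1 d, (1 - a i * q ^ m))) := by
            rw [hcancel, one_mul]
        _ = (∏ i : Fin n, (1 - (fun i => y * a i) i * q ^ (d + 1))) *
              ((∏ i : Fin n, ∏ m ∈ Finset.Icc 1 d, (1 - y * a i * q ^ m)) *
                Ring.inverse (∏ i : Fin n, ∏ m ∈ Finset.Icc 1 d, (1 - a i * q ^ m))) := by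
            simp [mul_assoc]
end

section
/- Step 2 of the B-chain (Appendix B): Let 𝓘_1 := Q_1 · (∏_{j≠1}(1 − λq(P_1/P_j)·σ_1σ_j^{−1})) 𝒥 and 𝓘_2 := (∏_{a=1}^{n}(1 + y(P_1/t_a)·σ_1)) 𝓘_1. Then for every (d_1,…,d_r) ∈ ℤ_{≥0}^r, the coefficient of Q_1^{d_1+1}Q_2^{d_2}⋯Q_r^{d_r} in 𝓘_2 equals B_2 := E · [∏_{j=1}^{n}∏_{m=1}^{d_1+1}(1 + yq^m P_1/t_j)] / [∏_{j=1}^{n}∏_{m=1}^{d_1}(1 − q^m P_1/t_j)] · ∏_{j≠1} [R_{d_1+1−d_j}(λP_1/P_j)/R^y_{d_1−d_j}(λP_1/P_j)] · [R_{d_j−d_1}(λP_j/P_1)/R^y_{d_j−d_1}(λP_j/P_1)] · F. -/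
open Finset

/-- The telescoped ratio `R_k(z) = ∏_{m=1}^{k}(1 − qᵐ z)` for `k ≥ 0` and
`R_k(z) = (∏_{m=k+1}^{0}(1 − qᵐ z))⁻¹` for `k < 0`. -/
noncomputable def Rfac {K : Type*} [Field K] (q z : K) (k : ℤ) : K :=
  if 0 ≤ k then ∏ m ∈ Finset.Icc 1 k.toNat, (1 - q ^ m * z)
  else (∏ s ∈ Finset.range (-k).toNat, (1 - q ^ (-(s : ℤ)) * z))⁻¹

/-- The telescoped ratio `R^y_k(z)`, defined as `R_k(z)` but with factors `(1 + y qᵐ z)`. -/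
noncomputable def Ryfac {K : Type*} [Field K] (q y z : K) (k : ℤ) : K :=
  if 0 ≤ k then ∏ m ∈ Finset.Icc 1 k.toNat, (1 + y * q ^ m * z)
  else (∏ s ∈ Finset.range (-k).toNat, (1 + y * q ^ (-(s : ℤ)) * z))⁻¹

/-- The coefficient `c_{(d_1,…,d_r)}` of the λ_y-balanced twisted J-function of the
abelianization `(ℙ^{n−1})^r` of `G(r,n)`. -/
noncomputable def coefJ {K : Type*} [Field K] {r n : ℕ} (q y lam : K)
    (P : Fin r → K) (t : Fin n → K) (d : Fin r →₀ ℕ) : K :=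
  (∏ i : Fin r, ∏ j : Fin n, ∏ m ∈ Finset.Icc 1 (d i), (1 + y * q ^ m * (P i / t j))) /
    (∏ i : Fin r, ∏ j : Fin n, ∏ m ∈ Finset.Icc 1 (d i), (1 - q ^ m * (P i / t j))) *
    ∏ i : Fin r, ∏ j ∈ Finset.univ.erase i,
      (Rfac q (lam * (P i / P j)) ((d i : ℤ) - (d j : ℤ)) /
        Ryfac q y (lam * (P i / P j)) ((d i : ℤ) - (d j : ℤ)))

/-- The λ_y-balanced twisted J-function `𝒥 = ∑ c_{(d_1,…,d_r)} Q_1^{d_1}⋯Q_r^{d_r}`. -/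
noncomputable def balJ {K : Type*} [Field K] {r n : ℕ} (q y lam : K)
    (P : Fin r → K) (t : Fin n → K) : MvPowerSeries (Fin r) K :=
  fun d => coefJ q y lam P t d

/-- The operator `σ_i` multiplying the coefficient of `Q_1^{d_1}⋯Q_r^{d_r}` by `q^{d_i}`,
realizing the q-difference operator `q^{Q_i ∂_{Q_i}}`; its inverse is `sigmaOp q⁻¹ i`. -/
noncomputable def sigmaOp {K : Type*} [Field K] {r : ℕ} (q : K) (i : Fin r) :
    MvPowerSeries (Fin r) K → MvPowerSeries (Fin r) K :=
  fun f d => q ^ (d i) * f d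

/-- The operator `1 − a·g : f ↦ f − a·g(f)`. -/
noncomputable def oneSubOp {K : Type*} [Field K] {r : ℕ} (a : K)
    (g : MvPowerSeries (Fin r) K → MvPowerSeries (Fin r) K) :
    MvPowerSeries (Fin r) K → MvPowerSeries (Fin r) K :=
  fun f => f - a • g f

/-- The operator `1 + a·g : f ↦ f + a·g(f)`. -/
noncomputable def onePlusOp {K : Type*} [Field K] {r : ℕ} (a : K)
    (g : MvPowerSeries (Fin r) K → MvPowerSeries (Fin r) K) :
    MvPowerSeries (Fin r) K → MvPowerSeries (Fin r) K :=
  fun f => f + a • g f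

/-- Composition of a (finite) list of commuting operators. -/
def prodOp {α : Type*} (l : List (α → α)) : α → α := l.foldr (· ∘ ·) id

/-- The q-difference operator
`𝒟_1^i = [∏_{j≠i}(1 + yλ(P_i/P_j)σ_iσ_j⁻¹)] ∘ [∏_{j≠i}(1 − λq(P_j/P_i)σ_jσ_i⁻¹)] ∘
[∏_{a=1}^{n}(1 − (P_i/t_a)σ_i)]`. -/
noncomputable def opD1 {K : Type*} [Field K] {r n : ℕ} (q y lam : K)
    (P : Fin r → K) (t : Fin n → K) (i : Fin r) :
    MvPowerSeries (Fin r) K → MvPowerSeries (Fin r) K :=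
  prodOp ((Finset.univ.erase i).toList.map fun j =>
      onePlusOp (y * lam * (P i / P j)) (sigmaOp q i ∘ sigmaOp q⁻¹ j)) ∘
    prodOp ((Finset.univ.erase i).toList.map fun j =>
      oneSubOp (lam * q * (P j / P i)) (sigmaOp q j ∘ sigmaOp q⁻¹ i)) ∘
    prodOp (List.ofFn fun a : Fin n => oneSubOp (P i / t a) (sigmaOp q i))

/-- The q-difference operator
`𝒟_2^i = [∏_{j≠i}(1 + yλq(P_j/P_i)σ_jσ_i⁻¹)] ∘ [∏_{a=1}^{n}(1 + y(P_i/t_a)σ_i)] ∘ M_{Q_i}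
∘ [∏_{j≠i}(1 − λq(P_i/P_j)σ_iσ_j⁻¹)]`, where `M_{Q_i}` is multiplication by `Q_i`. -/
noncomputable def opD2 {K : Type*} [Field K] {r n : ℕ} (q y lam : K)
    (P : Fin r → K) (t : Fin n → K) (i : Fin r) :
    MvPowerSeries (Fin r) K → MvPowerSeries (Fin r) K :=
  prodOp ((Finset.univ.erase i).toList.map fun j =>
      onePlusOp (y * lam * q * (P j / P i)) (sigmaOp q j ∘ sigmaOp q⁻¹ i)) ∘
    prodOp (List.ofFn fun a : Fin n => onePlusOp (y * (P i / t a)) (sigmaOp q i)) ∘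
    (fun f => MvPowerSeries.X i * f) ∘
    prodOp ((Finset.univ.erase i).toList.map fun j =>
      oneSubOp (lam * q * (P i / P j)) (sigmaOp q i ∘ sigmaOp q⁻¹ j))

/-- The quantity `E = [∏_{i=2}^{r}∏_{j=1}^{n}∏_{m=1}^{d_i}(1 + yqᵐ P_i/t_j)] /
[∏_{i=2}^{r}∏_{j=1}^{n}∏_{m=1}^{d_i}(1 − qᵐ P_i/t_j)]` of Appendix B, for a fixed tuple
`(d_1,…,d_r)`; here `i₀` is the index `1` of the paper. -/
noncomputable def bigE {K : Type*} [Field K] {r n : ℕ} (q y : K)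
    (P : Fin r → K) (t : Fin n → K) (i₀ : Fin r) (d : Fin r →₀ ℕ) : K :=
  (∏ i ∈ Finset.univ.erase i₀, ∏ j : Fin n, ∏ m ∈ Finset.Icc 1 (d i),
      (1 + y * q ^ m * (P i / t j))) /
    (∏ i ∈ Finset.univ.erase i₀, ∏ j : Fin n, ∏ m ∈ Finset.Icc 1 (d i),
      (1 - q ^ m * (P i / t j)))

/-- The quantity `F = ∏_{2≤i≠j≤r} R_{d_i−d_j}(λP_i/P_j)/R^y_{d_i−d_j}(λP_i/P_j)` of
Appendix B, for a fixed tuple `(d_1,…,d_r)`; here `i₀` is the index `1` of the paper. -/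
noncomputable def bigF {K : Type*} [Field K] {r : ℕ} (q y lam : K)
    (P : Fin r → K) (i₀ : Fin r) (d : Fin r →₀ ℕ) : K :=
  ∏ i ∈ Finset.univ.erase i₀, ∏ j ∈ (Finset.univ.erase i₀).erase i,
    Rfac q (lam * (P i / P j)) ((d i : ℤ) - (d j : ℤ)) /
      Ryfac q y (lam * (P i / P j)) ((d i : ℤ) - (d j : ℤ))

section Helpers

variable {K : Type*} [Field K] {r : ℕ}

lemma oneSubOp_sig_apply (q a : K) (i j : Fin r)
    (f : MvPowerSeries (Fin r) K) (d : Fin r →₀ ℕ) :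
    oneSubOp a (sigmaOp q i ∘ sigmaOp q⁻¹ j) f d
      = (1 - a * (q ^ (d i) * q⁻¹ ^ (d j))) * f d := by
  show f d - a * (q ^ (d i) * (q⁻¹ ^ (d j) * f d)) = _
  ring

lemma onePlusOp_sig_apply (q a : K) (i : Fin r)
    (f : MvPowerSeries (Fin r) K) (d : Fin r →₀ ℕ) :
    onePlusOp a (sigmaOp q i) f d = (1 + a * q ^ (d i)) * f d := by
  show f d + a * (q ^ (d i) * f d) = _
  ring

lemma prodOp_map_apply {α : Type*} (l : List α)
    (op : α → (MvPowerSeries (Fin r) K → MvPowerSeries (Fin r) K))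
    (w : α → (Fin r →₀ ℕ) → K)
    (h : ∀ a f d, op a f d = w a d * f d) (f : MvPowerSeries (Fin r) K) (d : Fin r →₀ ℕ) :
    prodOp (l.map op) f d = (l.map fun a => w a d).prod * f d := by
  induction l with
  | nil => simp [prodOp]
  | cons a l ih =>
      have e : prodOp ((a :: l).map op) f d = op a (prodOp (l.map op) f) d := rfl
      rw [e, h, ih, List.map_cons, List.prod_cons]
      ring

lemma prodOp_onePlus_apply {n : ℕ} (q y : K) (P : Fin r → K) (t : Fin n → K) (i₀ : Fin r)
    (f : MvPowerSeries (Fin r) K) (e : Fin r →₀ ℕ) :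
    prodOp (List.ofFn fun a : Fin n => onePlusOp (y * (P i₀ / t a)) (sigmaOp q i₀)) f e
      = (∏ a : Fin n, (1 + y * (P i₀ / t a) * q ^ (e i₀))) * f e := by
  rw [List.ofFn_eq_map,
    prodOp_map_apply _ _ (fun a d => 1 + y * (P i₀ / t a) * q ^ (d i₀))
      (fun a f d => onePlusOp_sig_apply q _ i₀ f d)]
  congr 1

lemma prodOp_oneSub_apply (q lam : K) (P : Fin r → K) (i₀ : Fin r)
    (f : MvPowerSeries (Fin r) K) (e : Fin r →₀ ℕ) :
    prodOp ((Finset.univ.erase i₀).toList.map fun j =>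
        oneSubOp (lam * q * (P i₀ / P j)) (sigmaOp q i₀ ∘ sigmaOp q⁻¹ j)) f e
      = (∏ j ∈ Finset.univ.erase i₀,
          (1 - lam * q * (P i₀ / P j) * (q ^ (e i₀) * q⁻¹ ^ (e j)))) * f e := by
  rw [prodOp_map_apply _ _
      (fun j d => 1 - lam * q * (P i₀ / P j) * (q ^ (d i₀) * q⁻¹ ^ (d j)))
      (fun j f d => oneSubOp_sig_apply q _ i₀ j f d)]
  congr 1
  exact Finset.prod_map_toList _ _

lemma zpow_nat_sub_add (q : K) (hq : q ≠ 0) (a b : ℕ) :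
    (q : K) ^ ((a : ℤ) - b + 1) = q * (q ^ a * q⁻¹ ^ b) := by
  have h1 : q⁻¹ ^ b = (q ^ b)⁻¹ := inv_pow q b
  rw [h1, zpow_add₀ hq, zpow_sub₀ hq, zpow_one, zpow_natCast, zpow_natCast,
    div_eq_mul_inv]
  ring

lemma Rfac_succ (q z : K) (k : ℤ) (h : 1 - q ^ (k + 1) * z ≠ 0) :
    Rfac q z (k + 1) = Rfac q z k * (1 - q ^ (k + 1) * z) := by
  rcases le_or_gt 0 k with hk | hk
  · rw [Rfac, Rfac, if_pos (by omega), if_pos hk]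
    have h1 : (k + 1).toNat = k.toNat + 1 := by omega
    have h2 : (q : K) ^ (k + 1) = q ^ (k.toNat + 1) := by
      rw [← zpow_natCast]
      congr 1
      omega
    rw [h1, Finset.prod_Icc_succ_top (by omega), h2]
  · rcases lt_or_eq_of_le (by omega : k + 1 ≤ 0) with hneg | h0
    · rw [Rfac, Rfac, if_neg (by omega), if_neg (by omega)]
      have hN : (-k).toNat = (-(k + 1)).toNat + 1 := by omega
      have hc : -(((-(k + 1)).toNat : ℕ) : ℤ) = k + 1 := by omega
      rw [hN, Finset.prod_range_succ, hc, mul_inv, mul_assoc, inv_mul_cancel₀ h, mul_one]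
    · have hk1 : k = -1 := by omega
      subst hk1
      have e0 : ((-1 : ℤ) + 1) = 0 := by ring
      rw [e0] at h ⊢
      rw [zpow_zero, one_mul] at h ⊢
      have e1 : Rfac q z 0 = 1 := by
        rw [Rfac, if_pos le_rfl]
        simp
      have e2 : Rfac q z (-1) = (1 - z)⁻¹ := by
        rw [Rfac, if_neg (by omega)]
        norm_num
      rw [e1, e2, inv_mul_cancel₀ h]

end Helpers

/-- **Step 2 of the B-chain (Appendix B):** with
`𝓘_1 := Q_1 · (∏_{j≠1}(1 − λq(P_1/P_j)σ_1σ_j⁻¹)) 𝒥` and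
`𝓘_2 := (∏_{a=1}^{n}(1 + y(P_1/t_a)σ_1)) 𝓘_1`, for every `(d_1,…,d_r) ∈ ℤ_{≥0}^r`
the coefficient of `Q_1^{d_1+1}Q_2^{d_2}⋯Q_r^{d_r}` in `𝓘_2` equals `B_2`. -/
theorem Bchain_step2 {K : Type*} [Field K] {r n : ℕ} (q y lam : K)
    (P : Fin r → K) (t : Fin n → K)
    (i₀ : Fin r) (hi₀ : (i₀ : ℕ) = 0)
    (hq : q ≠ 0) (hy : y ≠ 0) (hlam : lam ≠ 0)
    (hP : ∀ i, P i ≠ 0) (ht : ∀ j, t j ≠ 0)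
    (h1 : ∀ (i : Fin r) (j : Fin n) (m : ℕ), 1 ≤ m → 1 - q ^ m * (P i / t j) ≠ 0)
    (h2 : ∀ (i j : Fin r), i ≠ j → ∀ m : ℤ, 1 - q ^ m * (lam * (P i / P j)) ≠ 0)
    (h3 : ∀ (i j : Fin r), i ≠ j → ∀ m : ℤ, 1 + y * q ^ m * (lam * (P i / P j)) ≠ 0) :
    ∀ d : Fin r →₀ ℕ,
      MvPowerSeries.coeff (d + Finsupp.single i₀ 1)
        (prodOp (List.ofFn fun a : Fin n => onePlusOp (y * (P i₀ / t a)) (sigmaOp q i₀))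
          (MvPowerSeries.X i₀ *
            prodOp ((Finset.univ.erase i₀).toList.map fun j =>
                oneSubOp (lam * q * (P i₀ / P j)) (sigmaOp q i₀ ∘ sigmaOp q⁻¹ j))
              (balJ q y lam P t))) =
      bigE q y P t i₀ d *
        ((∏ j : Fin n, ∏ m ∈ Finset.Icc 1 (d i₀ + 1), (1 + y * q ^ m * (P i₀ / t j))) /
          (∏ j : Fin n, ∏ m ∈ Finset.Icc 1 (d i₀), (1 - q ^ m * (P i₀ / t j)))) *
        (∏ j ∈ Finset.univ.erase i₀,
          (Rfac q (lam * (P i₀ / P j)) ((d i₀ : ℤ) + 1 - (d j : ℤ)) /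
              Ryfac q y (lam * (P i₀ / P j)) ((d i₀ : ℤ) - (d j : ℤ))) *
            (Rfac q (lam * (P j / P i₀)) ((d j : ℤ) - (d i₀ : ℤ)) /
              Ryfac q y (lam * (P j / P i₀)) ((d j : ℤ) - (d i₀ : ℤ)))) *
        bigF q y lam P i₀ d := by
  classical
  intro d
  have hd'i : (d + Finsupp.single i₀ 1 : Fin r →₀ ℕ) i₀ = d i₀ + 1 := by
    simp
  have inner_eval : ((MvPowerSeries.X i₀ *
      prodOp ((Finset.univ.erase i₀).toList.map fun j =>
          oneSubOp (lam * q * (P i₀ / P j)) (sigmaOp q i₀ ∘ sigmaOp q⁻¹ j))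
        (balJ q y lam P t) : MvPowerSeries (Fin r) K) (d + Finsupp.single i₀ 1 : Fin r →₀ ℕ))
      = (∏ j ∈ Finset.univ.erase i₀,
          (1 - lam * q * (P i₀ / P j) * (q ^ (d i₀) * q⁻¹ ^ (d j)))) *
        coefJ q y lam P t d := by
    show MvPowerSeries.coeff (d + Finsupp.single i₀ 1) (MvPowerSeries.X i₀ *
      prodOp ((Finset.univ.erase i₀).toList.map fun j =>
          oneSubOp (lam * q * (P i₀ / P j)) (sigmaOp q i₀ ∘ sigmaOp q⁻¹ j))
        (balJ q y lam P t)) = _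
    rw [add_comm d (Finsupp.single i₀ 1),
      MvPowerSeries.X_def, MvPowerSeries.coeff_add_monomial_mul, one_mul,
      MvPowerSeries.coeff_apply, prodOp_oneSub_apply]
    rfl
  rw [MvPowerSeries.coeff_apply, prodOp_onePlus_apply, hd'i, inner_eval]
  -- now pure algebra
  simp only [coefJ, bigE]
  have fact1 : (∏ i : Fin r, ∏ j : Fin n, ∏ m ∈ Finset.Icc 1 (d i),
        (1 + y * q ^ m * (P i / t j)))
      = (∏ j : Fin n, ∏ m ∈ Finset.Icc 1 (d i₀), (1 + y * q ^ m * (P i₀ / t j))) *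
        (∏ i ∈ Finset.univ.erase i₀, ∏ j : Fin n, ∏ m ∈ Finset.Icc 1 (d i),
          (1 + y * q ^ m * (P i / t j))) :=
    (Finset.mul_prod_erase Finset.univ _ (Finset.mem_univ i₀)).symm
  have fact2 : (∏ i : Fin r, ∏ j : Fin n, ∏ m ∈ Finset.Icc 1 (d i),
        (1 - q ^ m * (P i / t j)))
      = (∏ j : Fin n, ∏ m ∈ Finset.Icc 1 (d i₀), (1 - q ^ m * (P i₀ / t j))) *
        (∏ i ∈ Finset.univ.erase i₀, ∏ j : Fin n, ∏ m ∈ Finset.Icc 1 (d i),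
          (1 - q ^ m * (P i / t j))) :=
    (Finset.mul_prod_erase Finset.univ _ (Finset.mem_univ i₀)).symm
  have fact3 : (∏ i : Fin r, ∏ j ∈ Finset.univ.erase i,
        (Rfac q (lam * (P i / P j)) ((d i : ℤ) - (d j : ℤ)) /
          Ryfac q y (lam * (P i / P j)) ((d i : ℤ) - (d j : ℤ))))
      = (∏ j ∈ Finset.univ.erase i₀,
          (Rfac q (lam * (P i₀ / P j)) ((d i₀ : ℤ) - (d j : ℤ)) /
            Ryfac q y (lam * (P i₀ / P j)) ((d i₀ : ℤ) - (d j : ℤ)))) *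
        ((∏ i ∈ Finset.univ.erase i₀,
          (Rfac q (lam * (P i / P i₀)) ((d i : ℤ) - (d i₀ : ℤ)) /
            Ryfac q y (lam * (P i / P i₀)) ((d i : ℤ) - (d i₀ : ℤ)))) *
          bigF q y lam P i₀ d) := by
    rw [← Finset.mul_prod_erase Finset.univ _ (Finset.mem_univ i₀)]
    congr 1
    rw [bigF, ← Finset.prod_mul_distrib]
    apply Finset.prod_congr rfl
    intro i hi
    have hii : i ≠ i₀ := (Finset.mem_erase.mp hi).1
    have hmem : i₀ ∈ Finset.univ.erase i :=
      Finset.mem_erase.mpr ⟨hii.symm, Finset.mem_univ _⟩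
    rw [← Finset.mul_prod_erase _ _ hmem, Finset.erase_right_comm]
  have fact4 : (∏ j ∈ Finset.univ.erase i₀,
        (1 - lam * q * (P i₀ / P j) * (q ^ (d i₀) * q⁻¹ ^ (d j)))) *
      (∏ j ∈ Finset.univ.erase i₀,
        (Rfac q (lam * (P i₀ / P j)) ((d i₀ : ℤ) - (d j : ℤ)) /
          Ryfac q y (lam * (P i₀ / P j)) ((d i₀ : ℤ) - (d j : ℤ))))
      = ∏ j ∈ Finset.univ.erase i₀,
          (Rfac q (lam * (P i₀ / P j)) ((d i₀ : ℤ) + 1 - (d j : ℤ)) /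
            Ryfac q y (lam * (P i₀ / P j)) ((d i₀ : ℤ) - (d j : ℤ))) := by
    rw [← Finset.prod_mul_distrib]
    apply Finset.prod_congr rfl
    intro j hj
    have hji : i₀ ≠ j := fun e => (Finset.mem_erase.mp hj).1 e.symm
    have hnz := h2 i₀ j hji (((d i₀ : ℤ) - (d j : ℤ)) + 1)
    have hw : (1 - lam * q * (P i₀ / P j) * (q ^ (d i₀) * q⁻¹ ^ (d j)))
        = 1 - q ^ (((d i₀ : ℤ) - (d j : ℤ)) + 1) * (lam * (P i₀ / P j)) := by
      rw [zpow_nat_sub_add q hq]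
      ring
    have hexp : ((d i₀ : ℤ) + 1 - (d j : ℤ)) = ((d i₀ : ℤ) - (d j : ℤ)) + 1 := by ring
    rw [hw, hexp, Rfac_succ q _ _ hnz]
    ring
  have fact5 : (∏ a : Fin n, (1 + y * (P i₀ / t a) * q ^ (d i₀ + 1))) *
      (∏ j : Fin n, ∏ m ∈ Finset.Icc 1 (d i₀), (1 + y * q ^ m * (P i₀ / t j)))
      = ∏ j : Fin n, ∏ m ∈ Finset.Icc 1 (d i₀ + 1), (1 + y * q ^ m * (P i₀ / t j)) := by
    rw [← Finset.prod_mul_distrib]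
    apply Finset.prod_congr rfl
    intro j _
    rw [Finset.prod_Icc_succ_top (by omega : 1 ≤ d i₀ + 1)]
    ring
  rw [fact1, fact2, fact3, Finset.prod_mul_distrib, ← fact4, ← fact5]
  ring
end
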